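/- Let (u_n)_{n≥1} be a sequence of positive reals that is regularly varying at infinity with index -γ for some γ > 1 (so in particular ∑ u_n =: u < ∞, assume u < 1). Then for each fixed k ≥ 1, the k-fold convolution satisfies u_n^{*(k)} / u_n → k u^{k-1} as n → ∞. -/

import Mathlib

/-- Convolution of sequences indexed by the positive integers:
`(a*b)(n) = ∑_{j=1}^{n-1} a(j) b(n-j)`. -/
noncomputable def conv (a b : ℕ → ℝ) (n : ℕ) : ℝ :=
  ∑ j ∈ Finset.Ico 1 n, a j * b (n - j)

/-- `iterConv a k = a^{*(k)}` for `k ≥ 1`: `a^{*(1)} = a` and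
`a^{*(k+1)} = a^{*(k)} * a`. -/
noncomputable def iterConv (a : ℕ → ℝ) : ℕ → ℕ → ℝ
  | 0, n => if n = 0 then 1 else 0
  | k + 1, n => if k = 0 then a n else conv (iterConv a k) a n

/-- A positive sequence `a` is regularly varying at infinity with index `ρ`
if `a ⌊l·n⌋ / a n → l ^ ρ` for every `l > 0`. -/
def RegVar (a : ℕ → ℝ) (ρ : ℝ) : Prop :=
  ∀ l : ℝ, 0 < l →
    Filter.Tendsto (fun n : ℕ => a ⌊l * (n : ℝ)⌋₊ / a n) Filter.atTop
      (nhds (l ^ ρ))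

/-!
Egorov's theorem upgrades the pointwise limits `u ⌊l n⌋ / (u n * l ^ ρ) → 1` to a uniform limit
on `[1, 4]` minus a set `t` of measure `< 1/2`. For `c ∈ [1/2, 1]` the sets `t` and `c⁻¹ t` cannot
cover `[2, 4]`, so some `l` has both `l` and `c l` outside `t`; with `c = m / n` the two limits
share the numerator `u ⌊l m⌋ = u ⌊c l n⌋`, and dividing them gives `u m / u n ≈ (m / n) ^ ρ`
uniformly for `n / 2 ≤ m ≤ n`. Hence `u (n - j) / u n → 1` and `u m ≤ C u n` on that range.

If `a` is summable with `a n / u n → c`, split `(a * u)(n) / u n` at `j = n / 2`: on each half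
one factor is comparable to `u n`, and dominated convergence gives the limits `∑ a` and `c ∑ u`.
Induction on `k` turns this into `u^{*(k)}_n / u_n → k u^{k-1}`.
-/

open Filter Topology MeasureTheory Set

lemma exists_mem_Icc_notMem_and_mul_notMem {E : Set ℝ} (hE : volume E < 1 / 2) {c : ℝ}
    (hc : 1 / 2 ≤ c) : ∃ l ∈ Icc (2 : ℝ) 4, l ∉ E ∧ c * l ∉ E := by
  by_contra! h
  have hc0 : 0 < c := by linarith
  have hcover : Icc (2 : ℝ) 4 ⊆ E ∪ (c * ·) ⁻¹' E := fun l hl => (em (l ∈ E)).imp_right (h l hl)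
  have hinv : ENNReal.ofReal |c⁻¹| ≤ 2 := by
    rw [abs_of_pos (inv_pos.2 hc0), ENNReal.ofReal_le_iff_le_toReal (by norm_num),
      ENNReal.toReal_ofNat, inv_le_comm₀ hc0 (by norm_num)]
    linarith
  have := calc (2 : ENNReal) = volume (Icc (2 : ℝ) 4) := by simp [Real.volume_Icc]; norm_num
    _ ≤ volume E + volume ((c * ·) ⁻¹' E) := (measure_mono hcover).trans (measure_union_le _ _)
    _ = volume E + ENNReal.ofReal |c⁻¹| * volume E := by
        rw [Real.volume_preimage_mul_left hc0.ne']
    _ ≤ volume E + 2 * volume E := by gcongr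
    _ = 3 * volume E := by ring
    _ < 3 * (1 / 2) := ENNReal.mul_lt_mul_right (a := 3) (by norm_num) (by norm_num) hE
    _ = 3 / 2 := by rw [← mul_div_assoc, mul_one]
    _ ≤ 2 := ENNReal.div_le_of_le_mul (by norm_num)
  exact this.false

lemma natCast_div_mem_Icc {m n : ℕ} (hn : 0 < n) (hmn : m ≤ n) (hnm : n ≤ 2 * m) :
    (m : ℝ) / n ∈ Icc (1 / 2) 1 := by
  have hn0 : (0 : ℝ) < n := by exact_mod_cast hn
  have hnm' : (n : ℝ) ≤ 2 * m := by exact_mod_cast hnm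
  rw [mem_Icc, le_div_iff₀ hn0, div_le_one hn0]
  exact ⟨by linarith, by exact_mod_cast hmn⟩

lemma rpow_le_two_rpow_abs {c : ℝ} (hc : c ∈ Icc (1 / 2) 1) (ρ : ℝ) : c ^ ρ ≤ 2 ^ |ρ| := by
  have hc0 : 0 < c := by linarith [hc.1]
  calc c ^ ρ ≤ c ^ (-|ρ|) := Real.rpow_le_rpow_of_exponent_ge hc0 hc.2 (neg_abs_le ρ)
    _ = c⁻¹ ^ |ρ| := by rw [Real.rpow_neg hc0.le, Real.inv_rpow hc0.le]
    _ ≤ 2 ^ |ρ| := by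
        gcongr
        rw [inv_le_comm₀ hc0 (by norm_num)]
        linarith [hc.1]

lemma TendstoUniformlyOn.tendsto_comp_of_eventually_mem {ι κ α β : Type*} [UniformSpace β]
    {F : κ → α → β} {b : β} {p : Filter κ} {s : Set α}
    (h : TendstoUniformlyOn F (fun _ => b) p s) {L : Filter ι} {k : ι → κ} {y : ι → α}
    (hk : Tendsto k L p) (hy : ∀ᶠ i in L, y i ∈ s) :
    Tendsto (fun i => F (k i) (y i)) L (𝓝 b) := by
  rw [Uniform.tendsto_nhds_right, tendsto_iff_forall_eventually_mem]
  intro U hU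
  filter_upwards [hk.eventually (h U hU), hy] with i hi hyi using hi _ hyi

lemma div_mul_rpow_div_eq {u : ℕ → ℝ} (hupos : ∀ n, 1 ≤ n → 0 < u n) {m n : ℕ} (hm : 1 ≤ m)
    (hmn : m ≤ n) {l : ℝ} (hl : 1 ≤ l) (ρ : ℝ) :
    u ⌊(m : ℝ) / n * l * n⌋₊ / (u n * ((m : ℝ) / n * l) ^ ρ) / (u ⌊l * m⌋₊ / (u m * l ^ ρ)) =
      u m / (u n * ((m : ℝ) / n) ^ ρ) := by
  have hm1 : (1 : ℝ) ≤ m := by exact_mod_cast hm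
  have hn0 : (0 : ℝ) < n := by exact_mod_cast (hm.trans hmn)
  have hfloor : ⌊(m : ℝ) / n * l * n⌋₊ = ⌊l * m⌋₊ := by
    congr 1
    field_simp
  have hk : 0 < u ⌊l * m⌋₊ := hupos _ (Nat.le_floor (by push_cast; nlinarith))
  have hum : 0 < u m := hupos _ hm
  have hun : 0 < u n := hupos _ (hm.trans hmn)
  have hc0 : 0 < (m : ℝ) / n := by positivity
  have hl0 : 0 < l := by linarith
  have := Real.rpow_pos_of_pos hc0 ρ
  have := Real.rpow_pos_of_pos hl0 ρ
  rw [hfloor, Real.mul_rpow hc0.le hl0.le]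
  field_simp

section RegVar

variable {u : ℕ → ℝ} {ρ : ℝ}

lemma RegVar.exists_tendstoUniformlyOn (hrv : RegVar u ρ) :
    ∃ t, volume t < 1 / 2 ∧
      TendstoUniformlyOn (fun (n : ℕ) (l : ℝ) => u ⌊l * n⌋₊ / (u n * l ^ ρ)) (fun _ => 1) atTop
        (Icc 1 4 \ t) := by
  have hmeas (n : ℕ) : StronglyMeasurable fun l : ℝ => u ⌊l * n⌋₊ / (u n * l ^ ρ) :=
    ((measurable_from_top.comp (Nat.measurable_floor.comp (measurable_id.mul_const _))).div
      (measurable_const.mul (measurable_id.pow_const ρ))).stronglyMeasurable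
  have hlim : ∀ l ∈ Icc (1 : ℝ) 4,
      Tendsto (fun n : ℕ => u ⌊l * n⌋₊ / (u n * l ^ ρ)) atTop (𝓝 1) := by
    intro l hl
    have hl0 : 0 < l := by linarith [hl.1]
    simpa [div_div, (Real.rpow_pos_of_pos hl0 ρ).ne'] using (hrv l hl0).div_const (l ^ ρ)
  obtain ⟨t, -, -, ht, hunif⟩ := tendstoUniformlyOn_of_ae_tendsto (μ := volume) hmeas
    stronglyMeasurable_const measurableSet_Icc (by simp [Real.volume_Icc]) (ae_of_all _ hlim)
    (by norm_num : (0 : ℝ) < 1 / 4)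
  refine ⟨t, ht.trans_lt ?_, hunif⟩
  rw [ENNReal.ofReal_lt_iff_lt_toReal (by norm_num) (by norm_num)]
  norm_num

theorem RegVar.tendsto_div_mul_rpow (hupos : ∀ n, 1 ≤ n → 0 < u n) (hrv : RegVar u ρ)
    {ι : Type*} {L : Filter ι} {m n : ι → ℕ} (hm : Tendsto m L atTop)
    (hmn : ∀ᶠ i in L, m i ≤ n i ∧ n i ≤ 2 * m i) :
    Tendsto (fun i => u (m i) / (u (n i) * ((m i : ℝ) / n i) ^ ρ)) L (𝓝 1) := by
  obtain ⟨t, ht, hunif⟩ := hrv.exists_tendstoUniformlyOn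
  have hchoice (c : ℝ) : ∃ l : ℝ, 1 / 2 ≤ c → l ∈ Icc (2 : ℝ) 4 ∧ l ∉ t ∧ c * l ∉ t := by
    by_cases hc : 1 / 2 ≤ c
    · obtain ⟨l, hl, hlt⟩ := exists_mem_Icc_notMem_and_mul_notMem ht hc
      exact ⟨l, fun _ => ⟨hl, hlt⟩⟩
    · exact ⟨0, fun h => absurd h hc⟩
  choose l hl using hchoice
  set c : ι → ℝ := fun i => (m i : ℝ) / n i
  have hgood : ∀ᶠ i in L, 1 ≤ m i ∧ m i ≤ n i ∧ n i ≤ 2 * m i :=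
    (hm.eventually_ge_atTop 1).and hmn
  have hc : ∀ᶠ i in L, c i ∈ Icc (1 / 2) 1 := by
    filter_upwards [hgood] with i ⟨hm1, hmn, hnm⟩
    exact natCast_div_mem_Icc (by omega) hmn hnm
  have hn : Tendsto n L atTop := tendsto_atTop_mono' L (hmn.mono fun i h => h.1) hm
  have hA := hunif.tendsto_comp_of_eventually_mem hn (y := fun i => c i * l (c i)) (by
    filter_upwards [hc] with i ⟨hc1, hc2⟩
    obtain ⟨⟨hl2, hl4⟩, -, hclt⟩ := hl _ hc1
    exact ⟨⟨by nlinarith, by nlinarith⟩, hclt⟩)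
  have hB := hunif.tendsto_comp_of_eventually_mem hm (y := fun i => l (c i)) (by
    filter_upwards [hc] with i ⟨hc1, _⟩
    obtain ⟨⟨hl2, hl4⟩, hlt, -⟩ := hl _ hc1
    exact ⟨⟨by linarith, hl4⟩, hlt⟩)
  have hAB := hA.div hB one_ne_zero
  rw [div_one] at hAB
  refine hAB.congr' ?_
  filter_upwards [hgood, hc] with i ⟨hm1, hmn, _⟩ ⟨hc1, _⟩
  exact div_mul_rpow_div_eq hupos hm1 hmn (by linarith [(hl _ hc1).1.1]) ρ

theorem RegVar.tendsto_sub_div (hupos : ∀ n, 1 ≤ n → 0 < u n) (hrv : RegVar u ρ) (j : ℕ) :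
    Tendsto (fun n => u (n - j) / u n) atTop (𝓝 1) := by
  have hratio := hrv.tendsto_div_mul_rpow hupos (m := fun n => n - j) (n := id)
    (tendsto_sub_atTop_nat j) (by
      filter_upwards [eventually_ge_atTop (2 * j)] with n hn
      exact ⟨Nat.sub_le n j, by simp only [id]; omega⟩)
  have hfrac : Tendsto (fun n : ℕ => ((n - j : ℕ) : ℝ) / n) atTop (𝓝 1) := by
    refine ((tendsto_natCast_div_add_atTop (j : ℝ)).comp (tendsto_sub_atTop_nat j)).congr' ?_
    filter_upwards [eventually_ge_atTop j] with n hn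
    simp [Nat.cast_sub hn]
  have hpow := hfrac.rpow_const (p := ρ) (Or.inl one_ne_zero)
  rw [Real.one_rpow] at hpow
  have hprod := hratio.mul hpow
  rw [one_mul] at hprod
  refine hprod.congr' ?_
  filter_upwards [eventually_gt_atTop j] with n hn
  have hnj : (0 : ℝ) < (n - j : ℕ) := by exact_mod_cast Nat.sub_pos_of_lt hn
  have hn0 : (0 : ℝ) < n := by exact_mod_cast (Nat.zero_lt_of_lt hn)
  have := Real.rpow_pos_of_pos (div_pos hnj hn0) ρ
  have := hupos n (by omega)
  simp only [id]
  field_simp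

theorem RegVar.exists_le_mul (hupos : ∀ n, 1 ≤ n → 0 < u n) (hrv : RegVar u ρ) :
    ∃ C : ℝ, 0 < C ∧ ∃ N : ℕ, ∀ m n, N ≤ m → m ≤ n → n ≤ 2 * m → u m ≤ C * u n := by
  set R : Set (ℕ × ℕ) := {p | p.1 ≤ p.2 ∧ p.2 ≤ 2 * p.1}
  have h := hrv.tendsto_div_mul_rpow hupos (L := atTop ⊓ 𝓟 R) (m := Prod.fst) (n := Prod.snd)
    ((prod_atTop_atTop_eq (α := ℕ) (β := ℕ) ▸ tendsto_fst).mono_left inf_le_left)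
    (eventually_inf_principal.2 (Eventually.of_forall fun _ hp => hp))
  obtain ⟨N, hN⟩ :=
    eventually_atTop_prod_self.1 (eventually_inf_principal.1 (h.eventually_lt_const one_lt_two))
  refine ⟨2 * 2 ^ |ρ|, by positivity, N + 1, fun m n hm hmn hnm => ?_⟩
  have hlt := hN m n (by omega) (by omega) ⟨hmn, hnm⟩
  have hc := natCast_div_mem_Icc (by omega) hmn hnm
  have hun := hupos n (by omega)
  have hpow := Real.rpow_pos_of_pos (lt_of_lt_of_le (by norm_num) hc.1) ρ
  rw [div_lt_iff₀ (by positivity)] at hlt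
  calc u m ≤ 2 * (u n * ((m : ℝ) / n) ^ ρ) := hlt.le
    _ ≤ 2 * (u n * 2 ^ |ρ|) := by grw [rpow_le_two_rpow_abs hc ρ]
    _ = 2 * 2 ^ |ρ| * u n := by ring

end RegVar

section Convolution

open Finset

lemma conv_eq_sum_range {a b : ℕ → ℝ} (ha0 : a 0 = 0) (hb0 : b 0 = 0) (n : ℕ) :
    conv a b n = ∑ j ∈ range (n + 1), a j * b (n - j) := by
  rcases Nat.eq_zero_or_pos n with rfl | hn
  · simp [conv, ha0]
  · rw [sum_range_succ, Nat.sub_self, hb0, mul_zero, add_zero, range_eq_Ico,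
      sum_eq_sum_Ico_succ_bot hn, ha0, zero_mul, zero_add, conv]

lemma hasSum_conv {a b : ℕ → ℝ} (ha0 : a 0 = 0) (hb0 : b 0 = 0) (ha : Summable a)
    (hb : Summable b) : HasSum (conv a b) ((∑' n, a n) * ∑' n, b n) := by
  rw [funext (conv_eq_sum_range ha0 hb0)]
  exact hasSum_sum_range_mul_of_summable_norm ha.norm hb.norm

lemma conv_eq_sum_add_sum {a b : ℕ → ℝ} (ha0 : a 0 = 0) (hb0 : b 0 = 0) (n : ℕ) :
    conv a b n = ∑ j ∈ range (n + 1), (if 2 * j ≤ n then a j * b (n - j) else 0) +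
      ∑ i ∈ range (n + 1), (if 2 * i < n then a (n - i) * b i else 0) := by
  rw [conv_eq_sum_range ha0 hb0,
    ← sum_range_reflect (fun i => if 2 * i < n then a (n - i) * b i else 0), ← sum_add_distrib]
  refine sum_congr rfl fun j hj => ?_
  have hjn : j ≤ n := Nat.lt_succ_iff.1 (mem_range.1 hj)
  simp only [Nat.add_sub_cancel, Nat.sub_sub_self hjn]
  split_ifs <;> first | omega | simp

end Convolution

section LocalSubexponential

open Finset

variable {u : ℕ → ℝ} {ρ : ℝ}

theorem RegVar.tendsto_tsum_lowerHalf_div (hupos : ∀ n, 1 ≤ n → 0 < u n) (hrv : RegVar u ρ)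
    {a : ℕ → ℝ} (ha : Summable a) :
    Tendsto (fun n => ∑' j, (if 2 * j ≤ n then a j * u (n - j) else 0) / u n) atTop
      (𝓝 (∑' j, a j)) := by
  obtain ⟨C, hC0, N, hC⟩ := hrv.exists_le_mul hupos
  refine tendsto_tsum_of_dominated_convergence (bound := fun j => C * |a j|)
    (ha.abs.mul_left C) (fun j => ?_) ?_
  · have hlim := (hrv.tendsto_sub_div hupos j).const_mul (a j)
    rw [mul_one] at hlim
    refine hlim.congr' ?_
    filter_upwards [eventually_ge_atTop (2 * j)] with n hn
    rw [if_pos hn, mul_div_assoc]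
  · filter_upwards [eventually_ge_atTop (2 * N + 1)] with n hn j
    have hun := hupos n (by omega)
    split_ifs with hj
    · rw [Real.norm_eq_abs, abs_div, abs_mul, abs_of_pos hun, abs_of_pos (hupos _ (by omega)),
        div_le_iff₀ hun, mul_assoc, mul_left_comm]
      exact mul_le_mul_of_nonneg_left (hC (n - j) n (by omega) (by omega) (by omega))
        (abs_nonneg _)
    · simp only [zero_div, norm_zero]
      positivity

theorem RegVar.tendsto_tsum_upperHalf_div (hu0 : u 0 = 0) (hupos : ∀ n, 1 ≤ n → 0 < u n)
    (hrv : RegVar u ρ) (hu : Summable u) {a : ℕ → ℝ} {c : ℝ}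
    (hc : Tendsto (fun n => a n / u n) atTop (𝓝 c)) :
    Tendsto (fun n => ∑' i, (if 2 * i < n then a (n - i) * u i else 0) / u n) atTop
      (𝓝 (c * ∑' i, u i)) := by
  have hunn (n : ℕ) : 0 ≤ u n := by
    rcases Nat.eq_zero_or_pos n with rfl | hn
    exacts [hu0.ge, (hupos n hn).le]
  obtain ⟨C, hC0, N, hC⟩ := hrv.exists_le_mul hupos
  obtain ⟨Na, hNa⟩ : ∃ Na, ∀ k ≥ Na, |a k| ≤ (|c| + 1) * u k := by
    refine eventually_atTop.1 ?_
    filter_upwards [hc.abs.eventually_lt_const (lt_add_one |c|), eventually_ge_atTop 1]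
      with k hk hk1
    rw [abs_div, abs_of_pos (hupos k hk1), div_lt_iff₀ (hupos k hk1)] at hk
    exact hk.le
  rw [← tsum_mul_left]
  refine tendsto_tsum_of_dominated_convergence (bound := fun i => (|c| + 1) * C * u i)
    (hu.mul_left _) (fun i => ?_) ?_
  · have hlim := ((hc.comp (tendsto_sub_atTop_nat i)).mul
      (hrv.tendsto_sub_div hupos i)).mul_const (u i)
    rw [mul_one] at hlim
    refine hlim.congr' ?_
    filter_upwards [eventually_gt_atTop (2 * i)] with n hn
    have := hupos (n - i) (by omega)
    rw [if_pos hn, Function.comp_apply]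
    field_simp
  · filter_upwards [eventually_ge_atTop (2 * (N + Na) + 1)] with n hn i
    have hun := hupos n (by omega)
    split_ifs with hi
    · rw [Real.norm_eq_abs, abs_div, abs_mul, abs_of_pos hun, abs_of_nonneg (hunn _),
        div_le_iff₀ hun]
      calc |a (n - i)| * u i ≤ (|c| + 1) * u (n - i) * u i := by
            gcongr
            exacts [hunn i, hNa _ (by omega)]
        _ ≤ (|c| + 1) * (C * u n) * u i := by
            gcongr
            · exact hunn i
            · exact hC (n - i) n (by omega) (by omega) (by omega)
        _ = (|c| + 1) * C * u i * u n := by ring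
    · simp only [zero_div, norm_zero]
      have := hunn i
      positivity

theorem RegVar.tendsto_conv_div (hu0 : u 0 = 0) (hupos : ∀ n, 1 ≤ n → 0 < u n)
    (hrv : RegVar u ρ) (hu : Summable u) {a : ℕ → ℝ} (ha0 : a 0 = 0) (ha : Summable a) {c : ℝ}
    (hc : Tendsto (fun n => a n / u n) atTop (𝓝 c)) :
    Tendsto (fun n => conv a u n / u n) atTop (𝓝 ((∑' n, a n) + c * ∑' n, u n)) := by
  refine ((hrv.tendsto_tsum_lowerHalf_div hupos ha).add
    (hrv.tendsto_tsum_upperHalf_div hu0 hupos hu hc)).congr fun n => ?_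
  rw [conv_eq_sum_add_sum ha0 hu0, add_div, sum_div, sum_div,
    tsum_eq_sum (s := range (n + 1)), tsum_eq_sum (s := range (n + 1))] <;>
  · intro j hj
    rw [Finset.mem_range] at hj
    rw [if_neg (by omega), zero_div]

end LocalSubexponential

section IterConv

lemma iterConv_one (a : ℕ → ℝ) : iterConv a 1 = a := by
  ext n
  simp [iterConv]

lemma iterConv_succ (a : ℕ → ℝ) {k : ℕ} (hk : 1 ≤ k) :
    iterConv a (k + 1) = conv (iterConv a k) a := by
  ext n
  simp [iterConv, Nat.one_le_iff_ne_zero.1 hk]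

lemma iterConv_apply_zero {a : ℕ → ℝ} (ha0 : a 0 = 0) {k : ℕ} (hk : 1 ≤ k) :
    iterConv a k 0 = 0 := by
  induction k, hk using Nat.le_induction with
  | base => rw [iterConv_one, ha0]
  | succ k hk _ => simp [iterConv_succ a hk, conv]

variable {u : ℕ → ℝ} {ρ : ℝ}

theorem RegVar.hasSum_iterConv_and_tendsto_iterConv_div (hu0 : u 0 = 0)
    (hupos : ∀ n, 1 ≤ n → 0 < u n) (hrv : RegVar u ρ) (hu : Summable u) {k : ℕ} (hk : 1 ≤ k) :
    HasSum (iterConv u k) ((∑' n, u n) ^ k) ∧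
      Tendsto (fun n => iterConv u k n / u n) atTop (𝓝 (k * (∑' n, u n) ^ (k - 1))) := by
  induction k, hk using Nat.le_induction with
  | base =>
    refine ⟨by simpa [iterConv_one] using hu.hasSum, ?_⟩
    simp only [iterConv_one, Nat.cast_one, Nat.sub_self, pow_zero, mul_one]
    refine tendsto_const_nhds.congr' ?_
    filter_upwards [eventually_ge_atTop 1] with n hn
    exact (div_self (hupos n hn).ne').symm
  | succ k hk ih =>
    obtain ⟨hsum, hlim⟩ := ih
    have ha0 := iterConv_apply_zero hu0 hk
    rw [iterConv_succ u hk]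
    refine ⟨by simpa [hsum.tsum_eq, pow_succ] using hasSum_conv ha0 hu0 hsum.summable hu, ?_⟩
    convert hrv.tendsto_conv_div hu0 hupos hu ha0 hsum.summable hlim using 2
    rw [hsum.tsum_eq, Nat.add_sub_cancel, mul_assoc, ← pow_succ, Nat.sub_add_cancel hk]
    push_cast
    ring

end IterConv

theorem stmt5_general (u : ℕ → ℝ) (hu0 : u 0 = 0) (hupos : ∀ n, 1 ≤ n → 0 < u n)
    (γ : ℝ) (hrv : RegVar u (-γ))
    (husum : Summable u) :
    ∀ k : ℕ, 1 ≤ k →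
      Filter.Tendsto (fun n => iterConv u k n / u n) Filter.atTop
        (nhds (k * (∑' n, u n) ^ (k - 1))) :=
  fun _ hk => (hrv.hasSum_iterConv_and_tendsto_iterConv_div hu0 hupos husum hk).2

/-- if `(u_n)` is positive, regularly varying with index `-γ`,
`γ > 1`, and `u := ∑_{n≥1} u_n < 1`, then `u_n^{*(k)} / u_n → k u^{k-1}` for
each fixed `k ≥ 1`. -/
theorem stmt5 (u : ℕ → ℝ) (hu0 : u 0 = 0) (hupos : ∀ n, 1 ≤ n → 0 < u n)
    (γ : ℝ) (hγ : 1 < γ) (hrv : RegVar u (-γ))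
    (husum : Summable u) (hult : (∑' n, u n) < 1) :
    ∀ k : ℕ, 1 ≤ k →
      Filter.Tendsto (fun n => iterConv u k n / u n) Filter.atTop
        (nhds (k * (∑' n, u n) ^ (k - 1))) :=
  stmt5_general u hu0 hupos γ hrv husum
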